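/- Moments of the linear-Boltzmann invariant solution: let N ≥ 1, R ≥ 0, and let Ē : (−∞, 0] → ℝ^N be measurable with |Ē(r)| ≤ R for all r. Define M̄(v) = ∫_{−∞}^0 e^{σ} M( v − ∫_σ^0 Ē(r) dr ) dσ. Then M̄ is a well-defined nonnegative element of L¹(ℝ^N) with ∫_{ℝ^N} M̄(v) dv = 1 and first moment ∫_{ℝ^N} v M̄(v) dv = ∫_{−∞}^0 e^{σ} Ē(σ) dσ. -/

import Mathlib

open MeasureTheory

/-- The standard Gaussian (Maxwellian) density on `ℝ^N`. -/
noncomputable def gaussM (N : ℕ) (v : EuclideanSpace ℝ (Fin N)) : ℝ :=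
  (2 * Real.pi) ^ (-(N : ℝ) / 2) * Real.exp (-‖v‖ ^ 2 / 2)

/-!
`M̄` is a superposition of translates of the Gaussian: `M̄(v) = ∫ w(σ) M(v - c(σ)) dσ` with weight
`w(σ) = e^σ` on `(-∞, 0]` and drift `c(σ) = ∫_σ^0 Ē`. By Fubini such a mixture is integrable with
mass `(∫ w)(∫ M) = 1`, and, `M` being centred, its first moment is `∫ w(σ) c(σ) dσ`. A second
application of Fubini, on `{σ < r ≤ 0}`, turns `∫ e^σ ∫_σ^0 Ē(r) dr dσ` into `∫ e^r Ē(r) dr`.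
-/

open Set Real

section Gaussian

variable {N : ℕ}

lemma gaussM_nonneg (v : EuclideanSpace ℝ (Fin N)) : 0 ≤ gaussM N v := by
  unfold gaussM; positivity

lemma continuous_gaussM : Continuous (gaussM N) := by
  unfold gaussM; fun_prop

lemma gaussM_neg (v : EuclideanSpace ℝ (Fin N)) : gaussM N (-v) = gaussM N v := by
  simp only [gaussM, norm_neg]

lemma integral_gaussM : ∫ v, gaussM N v = 1 := by
  have h := GaussianFourier.integral_rexp_neg_mul_sq_norm
    (V := EuclideanSpace ℝ (Fin N)) (b := 1 / 2) (by norm_num)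
  rw [finrank_euclideanSpace_fin, show π / (1 / 2) = 2 * π by ring] at h
  calc ∫ v, gaussM N v = (2 * π) ^ (-(N : ℝ) / 2) * ∫ v, exp (-(1 / 2) * ‖v‖ ^ 2) := by
        rw [← integral_const_mul]; congr with v; unfold gaussM; ring_nf
    _ = 1 := by rw [h, ← rpow_add (by positivity), neg_div, neg_add_cancel, rpow_zero]

lemma integrable_gaussM : Integrable (gaussM N) :=
  .of_integral_ne_zero (by rw [integral_gaussM]; exact one_ne_zero)

lemma integrable_exp_neg_mul_sq_norm {V : Type*} [NormedAddCommGroup V] [InnerProductSpace ℝ V]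
    [FiniteDimensional ℝ V] [MeasurableSpace V] [BorelSpace V] {b : ℝ} (hb : 0 < b) :
    Integrable (fun v : V => exp (-b * ‖v‖ ^ 2)) :=
  .of_integral_ne_zero (by rw [GaussianFourier.integral_rexp_neg_mul_sq_norm hb]; positivity)

lemma mul_exp_neg_sq_div_two_le (x : ℝ) : x * exp (-x ^ 2 / 2) ≤ exp (-(1 / 4) * x ^ 2) := by
  have hx : x ≤ exp (x ^ 2 / 4) := by
    nlinarith [add_one_le_exp (x ^ 2 / 4), sq_nonneg (x / 2 - 1)]
  calc x * exp (-x ^ 2 / 2) ≤ exp (x ^ 2 / 4) * exp (-x ^ 2 / 2) := by gcongr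
    _ = exp (-(1 / 4) * x ^ 2) := by rw [← exp_add]; ring_nf

lemma integrable_clm_mul_gaussM (L : EuclideanSpace ℝ (Fin N) →L[ℝ] ℝ) :
    Integrable (fun v => L v * gaussM N v) := by
  refine ((integrable_exp_neg_mul_sq_norm (V := EuclideanSpace ℝ (Fin N))
    (by norm_num : (0:ℝ) < 1 / 4)).const_mul (‖L‖ * (2 * π) ^ (-(N : ℝ) / 2))).mono'
    (L.continuous.mul continuous_gaussM).aestronglyMeasurable (.of_forall fun v => ?_)
  calc ‖L v * gaussM N v‖ ≤ ‖L‖ * ‖v‖ * gaussM N v := by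
        rw [norm_mul, Real.norm_of_nonneg (gaussM_nonneg v)]
        exact mul_le_mul_of_nonneg_right (L.le_opNorm v) (gaussM_nonneg v)
    _ = ‖L‖ * (2 * π) ^ (-(N : ℝ) / 2) * (‖v‖ * exp (-‖v‖ ^ 2 / 2)) := by
        unfold gaussM; ring
    _ ≤ ‖L‖ * (2 * π) ^ (-(N : ℝ) / 2) * exp (-(1 / 4) * ‖v‖ ^ 2) := by
        gcongr; exact mul_exp_neg_sq_div_two_le _

lemma integral_clm_mul_gaussM (L : EuclideanSpace ℝ (Fin N) →L[ℝ] ℝ) :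
    ∫ v, L v * gaussM N v = 0 := by
  have h := integral_neg_eq_self (fun v => L v * gaussM N v) volume
  simp only [map_neg, gaussM_neg, neg_mul, integral_neg] at h
  linarith

end Gaussian

section TranslateMixture

variable {α V : Type*} [MeasurableSpace α] {μ : Measure α}
  [NormedAddCommGroup V] [MeasurableSpace V] [BorelSpace V] [SecondCountableTopology V]
  {ν : Measure V} [SFinite ν] [ν.IsAddRightInvariant]
  {w : α → ℝ} {c : α → V} {ρ : V → ℝ}

noncomputable def translateMixture (μ : Measure α) (w : α → ℝ) (c : α → V) (ρ : V → ℝ)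
    (v : V) : ℝ :=
  ∫ a, w a * ρ (v - c a) ∂μ

lemma integrable_translateMixture_kernel (hw : Integrable w μ) (hc : Measurable c)
    (hρm : Measurable ρ) (hρ : Integrable ρ ν) :
    Integrable (fun p : α × V => w p.1 * ρ (p.2 - c p.1)) (μ.prod ν) := by
  have hm : AEStronglyMeasurable (fun p : α × V => w p.1 * ρ (p.2 - c p.1)) (μ.prod ν) :=
    hw.aestronglyMeasurable.comp_fst.mul
      (hρm.comp (measurable_snd.sub (hc.comp measurable_fst))).aestronglyMeasurable
  refine (integrable_prod_iff hm).2
    ⟨.of_forall fun a => (hρ.comp_sub_right (c a)).const_mul (w a), ?_⟩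
  refine (hw.norm.mul_const (∫ v, ‖ρ v‖ ∂ν)).congr (.of_forall fun a => ?_)
  simp only [norm_mul, integral_const_mul]
  rw [integral_sub_right_eq_self (fun v => ‖ρ v‖) (c a)]

variable [SFinite μ]

lemma integrable_translateMixture (hw : Integrable w μ) (hc : Measurable c)
    (hρm : Measurable ρ) (hρ : Integrable ρ ν) :
    Integrable (translateMixture μ w c ρ) ν :=
  (integrable_translateMixture_kernel hw hc hρm hρ).integral_prod_right

lemma integral_translateMixture (hw : Integrable w μ) (hc : Measurable c)
    (hρm : Measurable ρ) (hρ : Integrable ρ ν) :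
    ∫ v, translateMixture μ w c ρ v ∂ν = (∫ a, w a ∂μ) * ∫ v, ρ v ∂ν := by
  simp only [translateMixture]
  rw [← integral_integral_swap (integrable_translateMixture_kernel hw hc hρm hρ),
    ← integral_mul_const]
  refine integral_congr_ae (.of_forall fun a => ?_)
  simp only [integral_const_mul, integral_sub_right_eq_self (fun v => ρ v) (c a)]

lemma integral_clm_mul_translateMixture [NormedSpace ℝ V] [CompleteSpace V] (L : V →L[ℝ] ℝ)
    (hw : Integrable w μ) (hc : Measurable c) (hρm : Measurable ρ) (hρ : Integrable ρ ν)
    (hLρ : Integrable (fun u => L u * ρ u) ν) (hwc : Integrable (fun a => w a • c a) μ) :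
    ∫ v, L v * translateMixture μ w c ρ v ∂ν
      = (∫ a, w a ∂μ) * (∫ u, L u * ρ u ∂ν) + L (∫ a, w a • c a ∂μ) * ∫ u, ρ u ∂ν := by
  have hwL : Integrable (fun a => w a * L (c a)) μ := by
    simpa only [map_smul, smul_eq_mul] using L.integrable_comp hwc
  have hLρm : Measurable fun u => L u * ρ u := L.continuous.measurable.mul hρm
  have hK₁ := integrable_translateMixture_kernel hw hc hLρm hLρ
  have hK₂ := integrable_translateMixture_kernel hwL hc hρm hρ
  -- `L v = L (v - c a) + L (c a)` splits the moment into two mixtures.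
  have hsplit : (fun v => L v * translateMixture μ w c ρ v) =ᵐ[ν]
      translateMixture μ w c (fun u => L u * ρ u)
        + translateMixture μ (fun a => w a * L (c a)) c ρ := by
    filter_upwards [hK₁.prod_left_ae, hK₂.prod_left_ae] with v h₁ h₂
    rw [Pi.add_apply, translateMixture, translateMixture, translateMixture,
      ← integral_const_mul, ← integral_add h₁ h₂]
    refine integral_congr_ae (.of_forall fun a => ?_)
    simp only [map_sub]; ring
  rw [integral_congr_ae hsplit, Pi.add_def,
    integral_add (integrable_translateMixture hw hc hLρm hLρ)
      (integrable_translateMixture hwL hc hρm hρ),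
    integral_translateMixture hw hc hLρm hLρ, integral_translateMixture hwL hc hρm hρ,
    ← L.integral_comp_comm hwc]
  simp only [map_smul, smul_eq_mul]

end TranslateMixture

section ExpPrimitive

variable {E : Type*} [NormedAddCommGroup E] [NormedSpace ℝ E] {f : ℝ → E}

/-- `1_{σ < r ≤ 0} e^σ f(r)`, the Fubini integrand relating `∫ e^σ ∫_σ^0 f` and `∫ e^r f(r)`. -/
noncomputable def expPrimitiveKernel (f : ℝ → E) (p : ℝ × ℝ) : E :=
  (Iio p.2).indicator exp p.1 • (Iic 0).indicator f p.2

lemma expPrimitiveKernel_eq_indicator (σ : ℝ) :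
    (fun r => expPrimitiveKernel f (σ, r)) = (Ioc σ 0).indicator fun r => exp σ • f r := by
  ext r
  simp only [expPrimitiveKernel, indicator_apply, mem_Iio, mem_Iic, mem_Ioc]
  split_ifs <;> simp_all

lemma norm_expPrimitiveKernel (p : ℝ × ℝ) :
    ‖expPrimitiveKernel f p‖ = expPrimitiveKernel (fun r => ‖f r‖) p := by
  simp only [expPrimitiveKernel, norm_smul, norm_indicator_eq_indicator_norm, norm_eq_abs,
    abs_exp, smul_eq_mul]

lemma integral_expPrimitiveKernel_snd (σ : ℝ) :
    ∫ r, expPrimitiveKernel f (σ, r)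
      = (Iic 0).indicator (fun σ => exp σ • ∫ r in σ..0, f r) σ := by
  rw [expPrimitiveKernel_eq_indicator, integral_indicator measurableSet_Ioc, integral_smul]
  by_cases hσ : σ ≤ 0
  · rw [indicator_of_mem (mem_Iic.2 hσ), intervalIntegral.integral_of_le hσ]
  · rw [indicator_of_notMem (mt mem_Iic.1 hσ), Ioc_eq_empty (mt le_of_lt hσ),
      Measure.restrict_empty, integral_zero_measure, smul_zero]

lemma integral_expPrimitiveKernel_fst [CompleteSpace E] (r : ℝ) :
    ∫ σ, expPrimitiveKernel f (σ, r) = (Iic 0).indicator (fun r => exp r • f r) r := by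
  simp only [expPrimitiveKernel]
  rw [integral_smul_const, integral_indicator measurableSet_Iio, ← integral_Iic_eq_integral_Iio,
    integral_exp_Iic, indicator_smul_apply]

lemma integrable_expPrimitiveKernel (hf : AEStronglyMeasurable f)
    (hfi : IntegrableOn (fun r => exp r • f r) (Iic 0)) :
    Integrable (expPrimitiveKernel f) (volume.prod volume) := by
  have hexp : Measurable fun p : ℝ × ℝ => (Iio p.2).indicator exp p.1 := by
    have h : (fun p : ℝ × ℝ => (Iio p.2).indicator exp p.1)
        = {p : ℝ × ℝ | p.1 < p.2}.indicator fun p => exp p.1 := by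
      ext p; simp only [indicator_apply, mem_Iio, mem_ofPred_eq]
    rw [h]
    exact (measurable_exp.comp measurable_fst).indicator
      (measurableSet_lt measurable_fst measurable_snd)
  have hm : AEStronglyMeasurable (expPrimitiveKernel f) (volume.prod volume) :=
    hexp.aestronglyMeasurable.smul (hf.indicator measurableSet_Iic).comp_snd
  refine (integrable_prod_iff' hm).2 ⟨.of_forall fun r => ?_, ?_⟩
  · exact (((integrableOn_exp_Iic r).mono_set Iio_subset_Iic_self).integrable_indicator
      measurableSet_Iio).smul_const ((Iic 0).indicator f r)
  · simp only [norm_expPrimitiveKernel, integral_expPrimitiveKernel_fst]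
    refine (IntegrableOn.integrable_indicator hfi.norm measurableSet_Iic).congr
      (.of_forall fun r => ?_)
    simp only [norm_smul, norm_eq_abs, abs_exp, smul_eq_mul]

lemma integrableOn_exp_smul_intervalIntegral (hf : AEStronglyMeasurable f)
    (hfi : IntegrableOn (fun r => exp r • f r) (Iic 0)) :
    IntegrableOn (fun σ => exp σ • ∫ r in σ..0, f r) (Iic 0) := by
  have h := (integrable_expPrimitiveKernel hf hfi).integral_prod_left
  simp only [integral_expPrimitiveKernel_snd] at h
  exact (integrable_indicator_iff measurableSet_Iic).1 h

lemma integral_exp_smul_intervalIntegral [CompleteSpace E] (hf : AEStronglyMeasurable f)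
    (hfi : IntegrableOn (fun r => exp r • f r) (Iic 0)) :
    ∫ σ in Iic 0, exp σ • ∫ r in σ..0, f r = ∫ r in Iic 0, exp r • f r := by
  rw [← integral_indicator measurableSet_Iic, ← integral_indicator measurableSet_Iic,
    ← funext (integral_expPrimitiveKernel_snd (f := f)),
    ← funext (integral_expPrimitiveKernel_fst (f := f))]
  exact integral_integral_swap (integrable_expPrimitiveKernel hf hfi)

end ExpPrimitive

section BoundedField

variable {F : Type*} [NormedAddCommGroup F] {g : ℝ → F} {R : ℝ}

lemma intervalIntegrable_of_forall_norm_le {a b : ℝ} (hg : AEStronglyMeasurable g)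
    (hb : ∀ r ∈ uIoc a b, ‖g r‖ ≤ R) : IntervalIntegrable g volume a b :=
  intervalIntegrable_iff.2 <| Measure.integrableOn_of_bounded measure_Ioc_lt_top.ne hg
    (ae_restrict_of_forall_mem measurableSet_uIoc hb)

lemma integrableOn_exp_smul_of_norm_le [NormedSpace ℝ F] (hg : AEStronglyMeasurable g)
    (hb : ∀ r ≤ 0, ‖g r‖ ≤ R) :
    IntegrableOn (fun r => exp r • g r) (Iic 0) :=
  (integrableOn_exp_Iic 0).smul_bdd R hg.restrict
    (ae_restrict_of_forall_mem measurableSet_Iic hb)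

variable [NormedSpace ℝ F]

lemma continuous_intervalIntegral_left (hg : ∀ a b, IntervalIntegrable g volume a b) (b : ℝ) :
    Continuous fun a => ∫ r in a..b, g r :=
  (intervalIntegral.continuous_primitive hg b).neg.congr fun a =>
    (intervalIntegral.integral_symm b a).symm

lemma intervalIntegral_indicator_Iic {a b : ℝ} (hab : a ≤ b) :
    ∫ r in a..b, (Iic b).indicator g r = ∫ r in a..b, g r :=
  intervalIntegral.integral_congr fun _ hr => indicator_of_mem (uIcc_of_le hab ▸ hr).2 g

lemma exists_continuous_eqOn_intervalIntegral (hg : AEStronglyMeasurable g)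
    (hb : ∀ r ≤ 0, ‖g r‖ ≤ R) :
    ∃ c : ℝ → F, Continuous c ∧ EqOn c (fun σ => ∫ r in σ..0, g r) (Iic 0) := by
  have hbound (r : ℝ) : ‖(Iic 0).indicator g r‖ ≤ R := by
    rw [norm_indicator_eq_indicator_norm]
    exact indicator_le' hb (fun _ _ => (norm_nonneg _).trans (hb 0 le_rfl)) r
  exact ⟨fun σ => ∫ r in σ..0, (Iic 0).indicator g r,
    continuous_intervalIntegral_left (fun a b => intervalIntegrable_of_forall_norm_le
      (hg.indicator measurableSet_Iic) fun r _ => hbound r) 0,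
    fun σ hσ => intervalIntegral_indicator_Iic hσ⟩

end BoundedField

theorem LB_invariant_moments_general (N : ℕ) (R : ℝ)
    (Ebar : ℝ → EuclideanSpace ℝ (Fin N)) (hEm : Measurable Ebar)
    (hEb : ∀ r, r ≤ 0 → ‖Ebar r‖ ≤ R)
    (Mbar : EuclideanSpace ℝ (Fin N) → ℝ)
    (hMbar : ∀ v, Mbar v
      = ∫ σ in Set.Iic (0:ℝ), Real.exp σ * gaussM N (v - ∫ r in σ..(0:ℝ), Ebar r)) :
    (∀ v, 0 ≤ Mbar v) ∧
    Integrable Mbar ∧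
    ((∫ v : EuclideanSpace ℝ (Fin N), Mbar v) = 1) ∧
    (∀ i : Fin N, (∫ v : EuclideanSpace ℝ (Fin N), v i * Mbar v)
      = ∫ σ in Set.Iic (0:ℝ), Real.exp σ * Ebar σ i) := by
  have hEm' : AEStronglyMeasurable Ebar := hEm.aestronglyMeasurable
  have hEint := integrableOn_exp_smul_of_norm_le hEm' hEb
  obtain ⟨c, hc, hcEq⟩ := exists_continuous_eqOn_intervalIntegral hEm' hEb
  have hcExp : EqOn (fun σ => exp σ • c σ) (fun σ => exp σ • ∫ r in σ..0, Ebar r) (Iic 0) :=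
    fun σ hσ => congrArg (exp σ • ·) (hcEq hσ)
  have hcInt := (integrableOn_exp_smul_intervalIntegral hEm' hEint).congr_fun hcExp.symm
    measurableSet_Iic
  have hmix : Mbar = translateMixture (volume.restrict (Iic 0)) exp c (gaussM N) :=
    funext fun v => (hMbar v).trans <|
      setIntegral_congr_fun measurableSet_Iic fun σ hσ => by rw [hcEq hσ]
  have hw : Integrable exp (volume.restrict (Iic 0)) := integrableOn_exp_Iic 0
  have hρ : Measurable (gaussM N) := continuous_gaussM.measurable
  refine ⟨fun v => ?_, hmix ▸ integrable_translateMixture hw hc.measurable hρ integrable_gaussM,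
    ?_, fun i => ?_⟩
  · rw [hMbar]
    exact setIntegral_nonneg measurableSet_Iic fun σ _ =>
      mul_nonneg (exp_pos σ).le (gaussM_nonneg _)
  · rw [hmix, integral_translateMixture hw hc.measurable hρ integrable_gaussM,
      integral_exp_Iic_zero, integral_gaussM, one_mul]
  set L := EuclideanSpace.proj (𝕜 := ℝ) (ι := Fin N) i
  change ∫ v, L v * Mbar v = ∫ σ in Iic 0, exp σ * L (Ebar σ)
  rw [hmix, integral_clm_mul_translateMixture L hw hc.measurable hρ integrable_gaussM
      (integrable_clm_mul_gaussM L) hcInt, integral_clm_mul_gaussM, integral_gaussM, mul_zero,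
    zero_add, mul_one, setIntegral_congr_fun measurableSet_Iic hcExp,
    integral_exp_smul_intervalIntegral hEm' hEint, ← L.integral_comp_comm hEint]
  simp only [map_smul, smul_eq_mul]

/-- Moments of the linear-Boltzmann invariant solution
`M̄(v) = ∫_{-∞}^0 e^σ M(v - ∫_σ^0 Ē(r) dr) dσ`: it is a nonnegative probability density
with first moment `∫ v M̄(v) dv = ∫_{-∞}^0 e^σ Ē(σ) dσ`. -/
theorem LB_invariant_moments (N : ℕ) (hN : 1 ≤ N) (R : ℝ) (hR : 0 ≤ R)
    (Ebar : ℝ → EuclideanSpace ℝ (Fin N)) (hEm : Measurable Ebar)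
    (hEb : ∀ r, r ≤ 0 → ‖Ebar r‖ ≤ R)
    (Mbar : EuclideanSpace ℝ (Fin N) → ℝ)
    (hMbar : ∀ v, Mbar v
      = ∫ σ in Set.Iic (0:ℝ), Real.exp σ * gaussM N (v - ∫ r in σ..(0:ℝ), Ebar r)) :
    (∀ v, 0 ≤ Mbar v) ∧
    Integrable Mbar ∧
    ((∫ v : EuclideanSpace ℝ (Fin N), Mbar v) = 1) ∧
    (∀ i : Fin N, (∫ v : EuclideanSpace ℝ (Fin N), v i * Mbar v)
      = ∫ σ in Set.Iic (0:ℝ), Real.exp σ * Ebar σ i) :=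
  LB_invariant_moments_general N R Ebar hEm hEb Mbar hMbar
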